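/- Let d ≥ 1 be an integer, let γ₁,…,γ_d, b, β be complex numbers with b ≠ 0 and β ≠ 0, and let A ∈ ℂ satisfy 1 + b·exp(β·A) = 0. Let U ⊆ ℂ^d be an open neighborhood of 0 and let ψ : ℂ^d → ℂ be analytic on U with ψ(0) = A, such that 1 + b·exp(β·ψ(a)) + Σ_{i=1}^d a_i·exp(γ_i·ψ(a)) = 0 for all a = (a₁,…,a_d) ∈ U, and set φ(a) = exp(ψ(a)) with α := exp(A). Let I = (I(1),…,I(N)) be an ordered multiset, i.e. a tuple of indices in {1,…,d}, with N = |I| ≥ 1, and let ∂(φ,I) denote the iterated partial derivative (∂/∂a_{I(1)})⋯(∂/∂a_{I(N)}) φ evaluated at a = 0. Then ∂(φ,I) = −( exp(A·(1 + Σ_{h=1}^N (γ_{I(h)} − 1))) / g'(α)^{N} ) · (−β)^{N−1} · ( β^{−1} − 1 + β^{−1}·Σ_{h=1}^N γ_{I(h)} )_{N−1}, where g'(α) = b·β·exp(A·(β−1)). -/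

import Mathlib

/-- The partial derivative of `f : (Fin d → ℂ) → ℂ` in the `i`-th coordinate direction. -/
noncomputable def pd {d : ℕ} (i : Fin d) (f : (Fin d → ℂ) → ℂ) : (Fin d → ℂ) → ℂ :=
  fun x => fderiv ℂ f x (Pi.single i 1)

/-- The iterated partial derivative `(∂/∂a_{I 0}) ⋯ (∂/∂a_{I (N-1)}) f` along the
ordered multiset (tuple) `I`. -/
noncomputable def iterPDList {d N : ℕ} (I : Fin N → Fin d) (f : (Fin d → ℂ) → ℂ) :
    (Fin d → ℂ) → ℂ :=
  (List.ofFn I).foldr (fun i g => pd i g) f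

/-- The falling factorial `(p)_k = ∏_{i=1}^k (p - i + 1)` of a complex number. -/
noncomputable def fallC (p : ℂ) (k : ℕ) : ℂ :=
  ∏ i ∈ Finset.range k, (p - (i : ℂ))

/-!
Write `E_z = exp (z ψ)` and `T_{z,j} = exp (z ψ) ∂_j ψ`, so that `∂_k E_z = z T_{z,k}`.
Differentiating the equation in `a_j` and eliminating `b exp (β ψ)` with the equation itself gives
`β T_{x,j} = E_{x + γ_j} + ∑ i, a_i (γ_i - β) T_{x + γ_i, j}` near `0`. When `∂_l` is applied and
the result evaluated at `a = 0`, only the terms where one derivative hits the coefficient `a_{l[h]}`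
survive. The values `∂_l T_{x,j} (0)` thus satisfy a recursion in the length of `l`, whose
solution depends only on `s = x + γ_j + ∑ γ_{l[h]}` and is a falling factorial in `β⁻¹ s - 1`.
The prefactor of the theorem collapses to `β⁻¹ exp (A (1 + ∑ γ_{I h}))` because `b exp (β A) = -1`.
-/

open Complex Filter Topology

variable {d : ℕ}

noncomputable def iterPD (l : List (Fin d)) (f : (Fin d → ℂ) → ℂ) : (Fin d → ℂ) → ℂ :=
  l.foldr pd f

lemma iterPDList_eq_iterPD {N : ℕ} (I : Fin N → Fin d) (f : (Fin d → ℂ) → ℂ) :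
    iterPDList I f = iterPD (List.ofFn I) f :=
  rfl

lemma iterPD_append_singleton (l : List (Fin d)) (k : Fin d) (f : (Fin d → ℂ) → ℂ) :
    iterPD (l ++ [k]) f = iterPD l (pd k f) := by
  simp [iterPD]

section PartialDerivative

variable {f g : (Fin d → ℂ) → ℂ} {x : Fin d → ℂ}

lemma pd_add (hf : DifferentiableAt ℂ f x) (hg : DifferentiableAt ℂ g x) (i : Fin d) :
    pd i (fun y => f y + g y) x = pd i f x + pd i g x := by
  simp [pd, fderiv_fun_add hf hg]

lemma pd_const_mul (hf : DifferentiableAt ℂ f x) (c : ℂ) (i : Fin d) :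
    pd i (fun y => c * f y) x = c * pd i f x := by
  simp [pd, fderiv_const_mul hf]

lemma pd_sum {ι : Type*} {s : Finset ι} {F : ι → (Fin d → ℂ) → ℂ}
    (hF : ∀ i ∈ s, DifferentiableAt ℂ (F i) x) (k : Fin d) :
    pd k (fun y => ∑ i ∈ s, F i y) x = ∑ i ∈ s, pd k (F i) x := by
  simp [pd, fderiv_fun_sum hF]

lemma pd_sum_coord_mul {F : Fin d → (Fin d → ℂ) → ℂ} (hF : ∀ i, DifferentiableAt ℂ (F i) x)
    (k : Fin d) :
    pd k (fun y => ∑ i, y i * F i y) x = F k x + ∑ i, x i * pd k (F i) x := by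
  have h : HasFDerivAt (fun y => ∑ i, y i * F i y)
      (∑ i, (x i • fderiv ℂ (F i) x + F i x • ContinuousLinearMap.proj i)) x :=
    HasFDerivAt.fun_sum fun i _ => (hasFDerivAt_apply i x).mul (hF i).hasFDerivAt
  simp [pd, h.fderiv, Pi.single_apply, Finset.sum_add_distrib, add_comm]

lemma pd_const_add (c : ℂ) (i : Fin d) : pd i (fun y => c + f y) x = pd i f x := by
  simp [pd, fderiv_const_add]

lemma pd_exp_mul (hf : DifferentiableAt ℂ f x) (z : ℂ) (i : Fin d) :
    pd i (fun y => cexp (z * f y)) x = z * (cexp (z * f x) * pd i f x) := by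
  simp only [pd, ((hf.hasFDerivAt.const_mul z).cexp).fderiv, smul_apply, smul_eq_mul]
  ring

lemma pd_eq_zero_of_eventuallyEq_const {c : ℂ} (h : f =ᶠ[𝓝 x] fun _ => c) (i : Fin d) :
    pd i f x = 0 := by
  simp [pd, h.fderiv_eq]

lemma Filter.EventuallyEq.pd (h : f =ᶠ[𝓝 x] g) (i : Fin d) : pd i f =ᶠ[𝓝 x] pd i g :=
  (h.fderiv (𝕜 := ℂ)).mono fun _ hy => by simp only [_root_.pd, hy]

lemma Filter.EventuallyEq.iterPD (h : f =ᶠ[𝓝 x] g) (l : List (Fin d)) :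
    iterPD l f =ᶠ[𝓝 x] iterPD l g := by
  induction l with
  | nil => exact h
  | cons k l ih => exact ih.pd k

lemma AnalyticAt.pd (hf : AnalyticAt ℂ f x) (i : Fin d) : AnalyticAt ℂ (pd i f) x :=
  ((ContinuousLinearMap.apply ℂ ℂ (Pi.single i 1 : Fin d → ℂ)).analyticAt _).comp hf.fderiv

lemma AnalyticAt.iterPD (hf : AnalyticAt ℂ f x) (l : List (Fin d)) :
    AnalyticAt ℂ (iterPD l f) x := by
  induction l with
  | nil => exact hf
  | cons k l ih => exact ih.pd k

lemma iterPD_const_mul_eventuallyEq (hf : AnalyticAt ℂ f x) (c : ℂ) (l : List (Fin d)) :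
    iterPD l (fun y => c * f y) =ᶠ[𝓝 x] fun y => c * iterPD l f y := by
  induction l with
  | nil => rfl
  | cons k l ih =>
    exact (ih.pd k).trans <| (hf.iterPD l).eventually_analyticAt.mono fun _ hy =>
      pd_const_mul hy.differentiableAt c k

lemma iterPD_add_eventuallyEq (hf : AnalyticAt ℂ f x) (hg : AnalyticAt ℂ g x)
    (l : List (Fin d)) :
    iterPD l (fun y => f y + g y) =ᶠ[𝓝 x] fun y => iterPD l f y + iterPD l g y := by
  induction l with
  | nil => rfl
  | cons k l ih =>
    refine (ih.pd k).trans <| ((hf.iterPD l).eventually_analyticAt.and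
      (hg.iterPD l).eventually_analyticAt).mono fun _ hy =>
        pd_add hy.1.differentiableAt hy.2.differentiableAt k

/-- Each `∂/∂a_{l[h]}` either hits the coordinate `a_{l[h]}`, leaving the other derivatives to
act on `F_{l[h]}`, or passes through to `F_i`. -/
lemma iterPD_sum_coord_mul_eventuallyEq {F : Fin d → (Fin d → ℂ) → ℂ}
    (hF : ∀ i, AnalyticAt ℂ (F i) x) (l : List (Fin d)) :
    iterPD l (fun y => ∑ i, y i * F i y) =ᶠ[𝓝 x] fun y =>
      ∑ i, y i * iterPD l (F i) y + ∑ h : Fin l.length, iterPD (l.eraseIdx h) (F l[h]) y := by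
  induction l with
  | nil => simp [iterPD]
  | cons k l ih =>
    have hG : ∀ᶠ y in 𝓝 x, ∀ i, AnalyticAt ℂ (iterPD l (F i)) y :=
      eventually_all.2 fun i => ((hF i).iterPD l).eventually_analyticAt
    have hH : ∀ᶠ y in 𝓝 x, ∀ h : Fin l.length, AnalyticAt ℂ (iterPD (l.eraseIdx h) (F l[h])) y :=
      eventually_all.2 fun h => ((hF _).iterPD _).eventually_analyticAt
    refine (ih.pd k).trans <| (hG.and hH).mono fun y ⟨hGy, hHy⟩ => ?_
    rw [pd_add ((DifferentiableAt.fun_sum fun i _ =>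
        (differentiableAt_apply i y).fun_mul (hGy i).differentiableAt))
      (DifferentiableAt.fun_sum fun h _ => (hHy h).differentiableAt),
      pd_sum_coord_mul fun i => (hGy i).differentiableAt,
      pd_sum fun h _ => (hHy h).differentiableAt]
    simp only [iterPD, Fin.getElem_fin, List.foldr_cons, List.length_cons, Fin.sum_univ_succ,
      Fin.val_zero, List.getElem_cons_zero, List.eraseIdx_zero, List.tail_cons, Fin.val_succ,
      List.getElem_cons_succ, List.eraseIdx_cons_succ]
    ring

end PartialDerivative

section RecursionSolution

/-- The value of `∂_l (exp (x ψ) ∂_j ψ)` at `0`, as a function of `n = |l|` and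
`s = x + γ_j + ∑ h, γ_{l[h]}`. -/
noncomputable def derivCoeff (β A : ℂ) (n : ℕ) (s : ℂ) : ℂ :=
  β⁻¹ * cexp (A * s) * fallC (β⁻¹ * s - 1) n

lemma derivCoeff_succ {β : ℂ} (hβ : β ≠ 0) (A : ℂ) (n : ℕ) (s : ℂ) :
    derivCoeff β A (n + 1) s = β⁻¹ * (derivCoeff β A n s * (s - (n + 1) * β)) := by
  simp only [derivCoeff, fallC, Finset.prod_range_succ]
  field_simp
  ring

variable {α : Type*} (γ : α → ℂ) {β A : ℂ} (hβ : β ≠ 0)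
  {D : List α → ℂ → ℂ} {P : List α → ℂ → α → ℂ}
  (hD_nil : ∀ z, D [] z = cexp (A * z))
  (hD_concat : ∀ l k z, D (l ++ [k]) z = z * P l z k)
  (hP : ∀ l x j, P l x j = β⁻¹ * (D l (x + γ j) +
    ∑ h : Fin l.length, (γ l[h] - β) * P (l.eraseIdx h) (x + γ l[h]) j))
include hβ hD_nil hD_concat hP

theorem eq_derivCoeff_of_recursion (l : List α) (x : ℂ) (j : α) :
    P l x j = derivCoeff β A l.length (x + γ j + (l.map γ).sum) := by
  induction hn : l.length generalizing l x j with
  | zero =>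
    rw [List.length_eq_zero_iff.1 hn, hP, hD_nil]
    simp [derivCoeff, fallC]
  | succ n ih =>
    set s := x + γ j + (l.map γ).sum
    have h_erase : ∀ h : Fin l.length,
        P (l.eraseIdx h) (x + γ l[h]) j = derivCoeff β A n s := by
      intro h
      have h_sum := List.add_sum_eraseIdx (l := l.map γ) (i := h) (by simp)
        fun _ _ => AddCommute.all _ _
      rw [ih _ _ _ (by simp [List.length_eraseIdx_of_lt h.2, hn]), ← List.eraseIdx_map]
      simp only [List.getElem_map, Fin.getElem_fin] at h_sum ⊢
      congr 1
      linear_combination h_sum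
    have h_last : D l (x + γ j) = (x + γ j) * derivCoeff β A n s := by
      obtain ⟨L, k, rfl⟩ : ∃ L k, l = L ++ [k] := by
        rcases l.eq_nil_or_concat with rfl | ⟨L, k, rfl⟩
        · simp at hn
        · exact ⟨L, k, List.concat_eq_append ..⟩
      rw [hD_concat, ih L _ _ (by simpa using hn)]
      congr 2
      simp only [s, List.map_append, List.sum_append, List.map_cons, List.map_nil,
        List.sum_cons, List.sum_nil]
      ring
    rw [hP, h_last, Finset.sum_congr rfl fun h _ => by rw [h_erase h], ← Finset.sum_mul,
      Finset.sum_sub_distrib, derivCoeff_succ hβ]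
    simp only [Fin.getElem_fin, Fin.sum_univ_fun_getElem, Finset.sum_const, Finset.card_univ,
      Fintype.card_fin, hn, nsmul_eq_mul, s]
    push_cast
    ring

theorem eq_mul_derivCoeff_of_recursion {l : List α} (hl : l ≠ []) (z : ℂ) :
    D l z = z * derivCoeff β A (l.length - 1) (z + (l.map γ).sum) := by
  obtain ⟨L, k, rfl⟩ := List.eq_nil_or_concat l |>.resolve_left hl
  rw [List.concat_eq_append, hD_concat,
    eq_derivCoeff_of_recursion γ hβ hD_nil hD_concat hP]
  simp only [List.length_append, List.length_cons, List.length_nil, Nat.add_sub_cancel,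
    List.map_append, List.map_cons, List.map_nil, List.sum_append, List.sum_cons, List.sum_nil]
  ring_nf

end RecursionSolution

lemma derivCoeff_eq_of_root {b β A : ℂ} (hA : 1 + b * cexp (β * A) = 0) (hβ : β ≠ 0) {N : ℕ}
    (hN : 1 ≤ N) (S : ℂ) :
    derivCoeff β A (N - 1) (1 + S) =
      -(cexp (A * (1 + (S - N))) / (b * β * cexp (A * (β - 1))) ^ N) * (-β) ^ (N - 1) *
        fallC (β⁻¹ - 1 + β⁻¹ * S) (N - 1) := by
  obtain ⟨n, rfl⟩ : ∃ n, N = n + 1 := ⟨N - 1, by omega⟩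
  have h_den : b * β * cexp (A * (β - 1)) = -β * cexp (-A) := by
    rw [show A * (β - 1) = β * A + -A by ring, exp_add]
    linear_combination β * cexp (-A) * hA
  have h_num : cexp (A * (1 + (S - (n + 1 : ℕ)))) = cexp (A * (1 + S)) * cexp (-A) ^ (n + 1) := by
    rw [← exp_nat_mul, ← exp_add]
    congr 1
    push_cast
    ring
  rw [h_den, h_num, Nat.add_sub_cancel, derivCoeff,
    show β⁻¹ * (1 + S) - 1 = β⁻¹ - 1 + β⁻¹ * S by ring]
  field_simp
  ring

section TrinomialRoot

variable {γ : Fin d → ℂ} {b β : ℂ} {ψ : (Fin d → ℂ) → ℂ} {a : Fin d → ℂ}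

lemma mul_pd_root_eq (hψ : DifferentiableAt ℂ ψ a)
    (heq : ∀ᶠ y in 𝓝 a, 1 + b * cexp (β * ψ y) + ∑ i, y i * cexp (γ i * ψ y) = 0) (j : Fin d) :
    β * pd j ψ a =
      cexp (γ j * ψ a) + ∑ i, a i * ((γ i - β) * (cexp (γ i * ψ a) * pd j ψ a)) := by
  have hE (c : ℂ) : DifferentiableAt ℂ (fun y => cexp (c * ψ y)) a := (hψ.const_mul c).cexp
  have h_pd := pd_eq_zero_of_eventuallyEq_const heq j
  rw [pd_add (((hE β).const_mul b).const_add 1)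
      (DifferentiableAt.fun_sum fun i _ => (differentiableAt_apply i a).fun_mul (hE (γ i))),
    pd_const_add, pd_const_mul (hE β), pd_exp_mul hψ, pd_sum_coord_mul fun i => hE (γ i)] at h_pd
  simp only [pd_exp_mul hψ] at h_pd
  have h_sum : ∑ i, a i * ((γ i - β) * (cexp (γ i * ψ a) * pd j ψ a)) =
      ∑ i, a i * (γ i * (cexp (γ i * ψ a) * pd j ψ a)) -
        β * pd j ψ a * ∑ i, a i * cexp (γ i * ψ a) := by
    rw [Finset.mul_sum, ← Finset.sum_sub_distrib]
    exact Finset.sum_congr rfl fun i _ => by ring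
  rw [h_sum]
  linear_combination β * pd j ψ a * heq.self_of_nhds - h_pd

lemma exp_mul_pd_root_eventuallyEq (hψ : AnalyticAt ℂ ψ a)
    (heq : ∀ᶠ y in 𝓝 a, 1 + b * cexp (β * ψ y) + ∑ i, y i * cexp (γ i * ψ y) = 0)
    (hβ : β ≠ 0) (x : ℂ) (j : Fin d) :
    (fun y => cexp (x * ψ y) * pd j ψ y) =ᶠ[𝓝 a] fun y => β⁻¹ * (cexp ((x + γ j) * ψ y) +
      ∑ i, y i * ((γ i - β) * (cexp ((x + γ i) * ψ y) * pd j ψ y))) := by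
  filter_upwards [hψ.eventually_analyticAt, heq.eventually_nhds] with y hy hey
  calc cexp (x * ψ y) * pd j ψ y = β⁻¹ * cexp (x * ψ y) * (β * pd j ψ y) := by field_simp
    _ = _ := by
      rw [mul_pd_root_eq hy.differentiableAt hey j, mul_add, mul_add, Finset.mul_sum,
        Finset.mul_sum]
      simp only [add_mul, Complex.exp_add]
      congr 1
      · ring
      · exact Finset.sum_congr rfl fun i _ => by ring

lemma iterPD_exp_mul_append_singleton (hψ : AnalyticAt ℂ ψ a) (l : List (Fin d)) (k : Fin d)
    (z : ℂ) :
    iterPD (l ++ [k]) (fun y => cexp (z * ψ y)) a =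
      z * iterPD l (fun y => cexp (z * ψ y) * pd k ψ y) a := by
  have h_pd : pd k (fun y => cexp (z * ψ y)) =ᶠ[𝓝 a]
      fun y => z * (cexp (z * ψ y) * pd k ψ y) :=
    hψ.eventually_analyticAt.mono fun y hy => pd_exp_mul hy.differentiableAt z k
  rw [iterPD_append_singleton, (h_pd.iterPD l).self_of_nhds]
  exact (iterPD_const_mul_eventuallyEq
    ((analyticAt_const.mul hψ).cexp.mul (hψ.pd k)) z l).self_of_nhds

lemma iterPD_exp_mul_pd_root (hψ : AnalyticAt ℂ ψ 0)
    (heq : ∀ᶠ y in 𝓝 0, 1 + b * cexp (β * ψ y) + ∑ i, y i * cexp (γ i * ψ y) = 0)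
    (hβ : β ≠ 0) (l : List (Fin d)) (x : ℂ) (j : Fin d) :
    iterPD l (fun y => cexp (x * ψ y) * pd j ψ y) 0 =
      β⁻¹ * (iterPD l (fun y => cexp ((x + γ j) * ψ y)) 0 +
        ∑ h : Fin l.length, (γ l[h] - β) *
          iterPD (l.eraseIdx h) (fun y => cexp ((x + γ l[h]) * ψ y) * pd j ψ y) 0) := by
  have hE (c : ℂ) : AnalyticAt ℂ (fun y => cexp (c * ψ y)) 0 := (analyticAt_const.mul hψ).cexp
  have hT (c : ℂ) : AnalyticAt ℂ (fun y => cexp (c * ψ y) * pd j ψ y) 0 :=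
    (hE c).mul (hψ.pd j)
  have hF (i : Fin d) : AnalyticAt ℂ
      (fun y => (γ i - β) * (cexp ((x + γ i) * ψ y) * pd j ψ y)) 0 :=
    analyticAt_const.mul (hT _)
  have hS : AnalyticAt ℂ (fun y => ∑ i, y i *
      ((γ i - β) * (cexp ((x + γ i) * ψ y) * pd j ψ y))) 0 :=
    Finset.analyticAt_fun_sum _ fun i _ =>
      ((ContinuousLinearMap.proj i).analyticAt 0).fun_mul (hF i)
  rw [((exp_mul_pd_root_eventuallyEq hψ heq hβ x j).iterPD l).self_of_nhds,
    (iterPD_const_mul_eventuallyEq ((hE _).fun_add hS) _ l).self_of_nhds]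
  dsimp only
  rw [(iterPD_add_eventuallyEq (hE _) hS l).self_of_nhds]
  dsimp only
  rw [(iterPD_sum_coord_mul_eventuallyEq hF l).self_of_nhds]
  simp only [Pi.zero_apply, zero_mul, Finset.sum_const_zero, zero_add]
  congr 2
  exact Finset.sum_congr rfl fun h _ =>
    (iterPD_const_mul_eventuallyEq (hT _) _ _).self_of_nhds

end TrinomialRoot

theorem stmt1_general (d : ℕ) (γ : Fin d → ℂ) (b β A : ℂ)
    (hβ : β ≠ 0)
    (hA : 1 + b * Complex.exp (β * A) = 0)
    (U : Set (Fin d → ℂ)) (hU : IsOpen U) (hU0 : (0 : Fin d → ℂ) ∈ U)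
    (ψ : (Fin d → ℂ) → ℂ) (hψ : AnalyticOn ℂ ψ U) (hψ0 : ψ 0 = A)
    (heq : ∀ a ∈ U, 1 + b * Complex.exp (β * ψ a)
      + ∑ i, a i * Complex.exp (γ i * ψ a) = 0)
    (N : ℕ) (hN : 1 ≤ N) (I : Fin N → Fin d) :
    iterPDList I (fun a => Complex.exp (ψ a)) 0 =
      -(Complex.exp (A * (1 + ∑ h, (γ (I h) - 1))) /
          (b * β * Complex.exp (A * (β - 1))) ^ N) *
        (-β) ^ (N - 1) *
        fallC (β⁻¹ - 1 + β⁻¹ * ∑ h, γ (I h)) (N - 1) := by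
  have hψ_an : AnalyticAt ℂ ψ 0 := hψ.analyticAt (hU.mem_nhds hU0)
  have heq_near : ∀ᶠ y in 𝓝 0, 1 + b * cexp (β * ψ y) + ∑ i, y i * cexp (γ i * ψ y) = 0 :=
    eventually_of_mem (hU.mem_nhds hU0) heq
  have h_iter := eq_mul_derivCoeff_of_recursion γ hβ (A := A)
    (D := fun l z => iterPD l (fun y => cexp (z * ψ y)) 0)
    (P := fun l x j => iterPD l (fun y => cexp (x * ψ y) * pd j ψ y) 0)
    (by simp [iterPD, hψ0, mul_comm]) (iterPD_exp_mul_append_singleton hψ_an)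
    (iterPD_exp_mul_pd_root hψ_an heq_near hβ) (l := List.ofFn I) (by rw [Ne, List.ofFn_eq_nil_iff]; omega) 1
  have h_sum : ∑ h, (γ (I h) - 1) = ∑ h, γ (I h) - N := by simp [Finset.sum_sub_distrib]
  rw [iterPDList_eq_iterPD, h_sum, ← derivCoeff_eq_of_root hA hβ hN]
  simpa [List.map_ofFn, List.sum_ofFn] using h_iter

theorem stmt1 (d : ℕ) (hd : 1 ≤ d) (γ : Fin d → ℂ) (b β A : ℂ)
    (hb : b ≠ 0) (hβ : β ≠ 0)
    (hA : 1 + b * Complex.exp (β * A) = 0)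
    (U : Set (Fin d → ℂ)) (hU : IsOpen U) (hU0 : (0 : Fin d → ℂ) ∈ U)
    (ψ : (Fin d → ℂ) → ℂ) (hψ : AnalyticOn ℂ ψ U) (hψ0 : ψ 0 = A)
    (heq : ∀ a ∈ U, 1 + b * Complex.exp (β * ψ a)
      + ∑ i, a i * Complex.exp (γ i * ψ a) = 0)
    (N : ℕ) (hN : 1 ≤ N) (I : Fin N → Fin d) :
    iterPDList I (fun a => Complex.exp (ψ a)) 0 =
      -(Complex.exp (A * (1 + ∑ h, (γ (I h) - 1))) /
          (b * β * Complex.exp (A * (β - 1))) ^ N) *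
        (-β) ^ (N - 1) *
        fallC (β⁻¹ - 1 + β⁻¹ * ∑ h, γ (I h)) (N - 1) :=
  stmt1_general d γ b β A hβ hA U hU hU0 ψ hψ hψ0 heq N hN I
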